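/- Let d, k, n ≥ 2 and let (j_1,…,j_n) and (j′_1,…,j′_n) be two distinct n-tuples in {1,…,k}^n with j_1 + ⋯ + j_n = j′_1 + ⋯ + j′_n. Then the closure of A_{j_1} × ⋯ × A_{j_n} in F(ℝ^d,k)^n is disjoint from A_{j′_1} × ⋯ × A_{j′_n}. -/

import Mathlib

open unitInterval

noncomputable section

/-- Euclidean space ℝ^d. -/
abbrev E (d : ℕ) : Type := EuclideanSpace ℝ (Fin d)

/-- The ordered configuration space F(ℝ^d, k) of k distinct points in ℝ^d,
viewed as the subspace of (ℝ^d)^k of injective tuples. -/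
def Conf (d k : ℕ) : Set (Fin k → E d) := {x | Function.Injective x}

/-- The time i/(n-1) ∈ [0,1] at which the i-th configuration is visited. -/
def eTime (n : ℕ) (i : Fin n) : unitInterval :=
  Set.projIcc 0 1 zero_le_one ((i : ℝ) / ((n : ℝ) - 1))

/-- The evaluation map e_n : P(X) → X^n,
e_n(γ) = (γ(0), γ(1/(n-1)), …, γ((n-2)/(n-1)), γ(1)). -/
def evalMap {X : Type*} [TopologicalSpace X] (n : ℕ) (γ : C(unitInterval, X)) : Fin n → X :=
  fun i => γ (eTime n i)

/-- `A ⊆ X^n` admits a continuous section of the evaluation map e_n. -/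
def HasSec {X : Type*} [TopologicalSpace X] (n : ℕ) (A : Set (Fin n → X)) : Prop :=
  ∃ s : A → C(unitInterval, X), Continuous s ∧ ∀ a : A, evalMap n (s a) = (a : Fin n → X)

/-- The projection p : ℝ^d → ℝ^d onto the first coordinate axis. -/
def projL {d : ℕ} (x : E d) : E d :=
  (WithLp.equiv 2 (Fin d → ℝ)).symm fun j => if (j : ℕ) = 0 then x j else 0

/-- cp(C) = cardinality of {p(x_1),…,p(x_k)}. -/
def cp {d k : ℕ} (C : Fin k → E d) : ℕ := (Set.range fun i => projL (C i)).ncard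

/-- The product A_{j_1} × ⋯ × A_{j_n} ⊆ F(ℝ^d,k)^n. -/
def Aprod (d k n : ℕ) (jv : Fin n → ℕ) : Set (Fin n → ↥(Conf d k)) :=
  {C | ∀ s : Fin n, cp ((C s : Fin k → E d)) = jv s}


/-!
Distinct points stay distinct under small perturbations, so `cp` is lower semicontinuous and
the closure of `A_{j_1} × ⋯ × A_{j_n}` lies in `{C | cp (C s) ≤ j_s for all s}`. A point of
`A_{j'_1} × ⋯ × A_{j'_n}` in it has `j' ≤ j` coordinatewise, and equal sums then force `j' = j`.
-/

open Filter Topology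

theorem eventually_nhds_injOn {ι Y : Type*} [Finite ι] [TopologicalSpace Y] [T2Space Y]
    {u : Set ι} {x : ι → Y} (hx : u.InjOn x) : ∀ᶠ y in 𝓝 x, u.InjOn y := by
  have hpair : ∀ a b, ∀ᶠ y in 𝓝 x, a ∈ u → b ∈ u → y a = y b → a = b := by
    intro a b
    by_cases hab : a ∈ u ∧ b ∈ u ∧ x a ≠ x b
    · filter_upwards [((continuous_apply a).continuousAt.ne_iff_eventually_ne
        (continuous_apply b).continuousAt).1 hab.2.2] with y hy _ _ h using absurd h hy
    · exact .of_forall fun _ ha hb _ => hx ha hb (by tauto)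
  exact (eventually_all.2 fun a => eventually_all.2 (hpair a)).mono
    fun y hy a ha b hb => hy a b ha hb

theorem lowerSemicontinuous_ncard_range {ι Y : Type*} [Finite ι] [TopologicalSpace Y]
    [T2Space Y] : LowerSemicontinuous fun x : ι → Y => (Set.range x).ncard := by
  intro x j hj
  obtain ⟨u, -, hinj, himage⟩ :=
    (Set.surjOn_image x Set.univ).exists_subset_injOn_image_eq
  rw [Set.image_univ] at himage
  filter_upwards [eventually_nhds_injOn hinj] with y hy
  calc j < (Set.range x).ncard := hj
    _ = u.ncard := by rw [← himage, hinj.ncard_image]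
    _ = (y '' u).ncard := hy.ncard_image.symm
    _ ≤ (Set.range y).ncard := Set.ncard_le_ncard (Set.image_subset_range y u)

theorem continuous_projL {d : ℕ} : Continuous (projL (d := d)) := by
  refine (PiLp.continuous_toLp 2 _).comp (continuous_pi fun j => ?_)
  split_ifs <;> fun_prop

theorem lowerSemicontinuous_cp {d k : ℕ} : LowerSemicontinuous (cp (d := d) (k := k)) :=
  lowerSemicontinuous_ncard_range.comp <|
    continuous_pi fun i => continuous_projL.comp (continuous_apply i)

theorem closure_Aprod_subset {d k n : ℕ} (jv : Fin n → ℕ) :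
    closure (Aprod d k n jv) ⊆ {C | ∀ s, cp (C s : Fin k → E d) ≤ jv s} := by
  refine closure_minimal (fun C hC s => (hC s).le) ?_
  simp only [Set.ofPred_forall]
  exact isClosed_iInter fun s => lowerSemicontinuous_cp.isClosed_preimage (jv s) |>.preimage
    (continuous_subtype_val.comp (continuous_apply s))

theorem stmt8_general (d k n : ℕ)
    (jv jv' : Fin n → ℕ)
    (hne : jv ≠ jv') (hsum : (∑ s, jv s) = ∑ s, jv' s) :
    closure (Aprod d k n jv) ∩ Aprod d k n jv' = ∅ := by
  refine Set.eq_empty_of_forall_notMem fun C ⟨hC, hC'⟩ => hne ?_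
  have hle : ∀ s ∈ Finset.univ, jv' s ≤ jv s := fun s _ => hC' s ▸ closure_Aprod_subset jv hC s
  exact funext fun s => ((Finset.sum_eq_sum_iff_of_le hle).1 hsum.symm s (Finset.mem_univ s)).symm

/-- For d, k, n ≥ 2 and distinct n-tuples (j_1,…,j_n) ≠
(j'_1,…,j'_n) in {1,…,k}^n with equal sums, the closure of A_{j_1} × ⋯ × A_{j_n}
in F(ℝ^d,k)^n is disjoint from A_{j'_1} × ⋯ × A_{j'_n}. -/
theorem stmt8 (d k n : ℕ) (hd : 2 ≤ d) (hk : 2 ≤ k) (hn : 2 ≤ n)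
    (jv jv' : Fin n → ℕ)
    (hjv : ∀ s, 1 ≤ jv s ∧ jv s ≤ k) (hjv' : ∀ s, 1 ≤ jv' s ∧ jv' s ≤ k)
    (hne : jv ≠ jv') (hsum : (∑ s, jv s) = ∑ s, jv' s) :
    closure (Aprod d k n jv) ∩ Aprod d k n jv' = ∅ :=
  stmt8_general d k n jv jv' hne hsum
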